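/- Let W be a vector space and suppose A_j(x) ∈ Hom(W,W((x⁻¹))) for 0 ≤ j ≤ s satisfy Σ_{j=0}^{s} q(x₁,x) A_j(x) (1/j!)(∂/∂x)^j x₁⁻¹δ(x/x₁) = 0, where q(x,z) is a polynomial such that q(x,1) and (x−1) are relatively prime in ℂ[x]. Then A_j(x) = 0 for all 0 ≤ j ≤ s. -/

import Mathlib

/-- The generalized binomial coefficient `C(a, k) = a(a−1)⋯(a−k+1)/k!` for `a ∈ ℤ`. -/
noncomputable def intBinom (a : ℤ) (k : ℕ) : ℂ :=
  (∏ j ∈ Finset.range k, ((a : ℂ) - (j : ℂ))) / (k.factorial : ℂ)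

/-!
Multiplying the equation by `x₁/x - 1` kills the `j = 0` term and turns the `j`-th derivative of
the delta function into the `(j-1)`-st, so by induction on `s` the `A_j` with `j ≥ 1` vanish.
What is left is `q(x₁,x) A_0(x) x₁⁻¹δ(x/x₁) = 0`, where `x₁` may be replaced by `x`: the
coefficients of `A_0(x) w` satisfy a linear recurrence with characteristic polynomial `q(x,x)`,
which is nonzero because `q(1,1) ≠ 0`. A solution of such a recurrence vanishing far to the
left vanishes everywhere.
-/

open Polynomial Finset

lemma eval_X_ne_zero_of_isCoprime {K : Type*} [CommRing K] [Nontrivial K] {q : K[X][X]}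
    (h : IsCoprime (q.map (evalRingHom 1)) (X - C 1)) : q.eval X ≠ 0 := by
  have h11 : (q.map (evalRingHom (1 : K))).eval 1 ≠ 0 := by
    simpa using aeval_ne_zero_of_isCoprime h (1 : K)
  have h_eval_one : (q.map (evalRingHom 1)).eval 1 = (q.eval X).eval 1 := by
    rw [eval_map, ← coe_evalRingHom, eval, hom_eval₂]
    simp
  contrapose! h11
  rw [h_eval_one, h11, eval_zero]

lemma sum_support_sum_support_smul_eq_sum_eval_X {R M : Type*} [CommSemiring R]
    [AddCommMonoid M] [Module R M] (q : R[X][X]) (f : ℕ → M) :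
    ∑ i ∈ q.support, ∑ k ∈ (q.coeff i).support, (q.coeff i).coeff k • f (k + i)
      = (q.eval X).sum fun t c => c • f t := by
  let Φ : R[X] →ₗ[R] M := lsum fun t => LinearMap.toSpanSingleton R M (f t)
  have hΦ (p : R[X]) : Φ p = p.sum fun t c => c • f t := lsum_apply _ _
  have hΦ_mul_X_pow (p : R[X]) (i : ℕ) :
      Φ (p * X ^ i) = ∑ k ∈ p.support, p.coeff k • f (k + i) := by
    conv_lhs => rw [p.as_sum_support, sum_mul, map_sum]
    refine sum_congr rfl fun k _ => ?_
    rw [← C_mul_X_pow_eq_monomial, mul_assoc, ← pow_add, C_mul_X_pow_eq_monomial, hΦ,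
      sum_monomial_index _ _ (zero_smul R _)]
  rw [← hΦ, eval_eq_sum, Polynomial.sum_def, map_sum]
  exact sum_congr rfl fun i _ => (hΦ_mul_X_pow _ _).symm

theorem eq_zero_of_forall_sum_smul_shift_eq_zero {K M : Type*} [Semiring K] [IsDomain K]
    [AddCommMonoid M] [Module K M] [Module.IsTorsionFree K M] {P : K[X]} (hP : P ≠ 0) {f : ℤ → M}
    (hf : ∃ N, ∀ n ≤ N, f n = 0) (hrec : ∀ m : ℤ, (P.sum fun t c => c • f (t + m)) = 0) :
    f = 0 := by
  obtain ⟨N, hN⟩ := hf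
  by_contra hne
  obtain ⟨n, hn, hmin⟩ := Int.exists_least_of_bdd (P := fun n => f n ≠ 0)
    ⟨N + 1, fun z hz => by by_contra! h; exact hz (hN z (by omega))⟩
    (Function.ne_iff.mp hne)
  set d := P.natDegree
  -- at the least `n` with `f n ≠ 0`, the shift `n - d` isolates the term `P.coeff d • f n`
  have h := hrec (n - d)
  rw [Polynomial.sum_def, sum_eq_single_of_mem d (natDegree_mem_support_of_nonzero hP)] at h
  · rw [add_sub_cancel] at h
    exact hn ((smul_eq_zero_iff_right (leadingCoeff_ne_zero.mpr hP)).mp h)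
  · intro t ht htd
    have htd' : (t : ℤ) < d := by exact_mod_cast (le_natDegree_of_mem_supp t ht).lt_of_ne htd
    have : f (t + (n - d)) = 0 := by
      by_contra h'
      have := hmin _ h'
      omega
    rw [this, smul_zero]

lemma intBinom_eq_choose (a : ℤ) (k : ℕ) : intBinom a k = ((Ring.choose a k : ℤ) : ℂ) := by
  have h := congrArg (Int.cast : ℤ → ℂ) (Ring.descPochhammer_eq_factorial_smul_choose a k)
  rw [← eval_eq_smeval, descPochhammer_eval_eq_prod_range, nsmul_eq_mul] at h
  push_cast at h
  rw [intBinom, h, mul_div_cancel_left₀ _ (by exact_mod_cast k.factorial_ne_zero)]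

lemma intBinom_zero (a : ℤ) : intBinom a 0 = 1 := by
  simp [intBinom]

lemma intBinom_add_one_succ (a : ℤ) (k : ℕ) :
    intBinom (a + 1) (k + 1) = intBinom a k + intBinom a (k + 1) := by
  simp only [intBinom_eq_choose, Ring.choose_succ_succ, Int.cast_add]

section

variable {W : Type*} [AddCommGroup W] [Module ℂ W]

/-- The coefficient of `x₁^a x^b` in `Σ_{j ≤ s} q(x₁,x) B_j(x) (1/j!)(∂/∂x)^j x₁⁻¹δ(x/x₁)`,
where `B_j(x) = Σ_n B j n x^{-n-1}`. -/
noncomputable def deltaCoeff (q : ℂ[X][X]) (s : ℕ) (B : ℕ → ℤ → W) (a b : ℤ) : W :=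
  ∑ j ∈ range (s + 1), ∑ i ∈ q.support, ∑ k ∈ (q.coeff i).support,
    (((q.coeff i).coeff k) * intBinom ((i : ℤ) - a - 1) j) •
      B j ((k : ℤ) + (i : ℤ) - a - (j : ℤ) - b - 2)

/-- Multiplying by `x₁/x - 1` annihilates the `j = 0` term and, by Pascal's rule, lowers the
order of every other derivative of the delta function by one. -/
lemma deltaCoeff_sub_deltaCoeff (q : ℂ[X][X]) (s : ℕ) (B : ℕ → ℤ → W) (a b : ℤ) :
    deltaCoeff q (s + 1) B (a - 1) b - deltaCoeff q (s + 1) B a (b - 1)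
      = deltaCoeff q s (fun j => B (j + 1)) a b := by
  have hterm : ∀ (j i k : ℕ) (c : ℂ),
      (c * intBinom ((i : ℤ) - (a - 1) - 1) j) • B j ((k : ℤ) + i - (a - 1) - j - b - 2)
        - (c * intBinom ((i : ℤ) - a - 1) j) • B j ((k : ℤ) + i - a - j - (b - 1) - 2)
      = (c * (intBinom ((i : ℤ) - a - 1 + 1) j - intBinom ((i : ℤ) - a - 1) j)) •
          B j ((k : ℤ) + i - a - j - b - 1) := by
    intro j i k c
    rw [mul_sub, sub_smul]
    congr 3 <;> ring_nf
  simp only [deltaCoeff, ← sum_sub_distrib, hterm]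
  rw [sum_range_succ' _ (s + 1)]
  simp only [intBinom_zero, sub_self, mul_zero, zero_smul, sum_const_zero, add_zero,
    intBinom_add_one_succ, add_sub_cancel_right]
  refine sum_congr rfl fun j _ => sum_congr rfl fun i _ => sum_congr rfl fun k _ => ?_
  congr 2
  push_cast
  ring

lemma deltaCoeff_eq_sum_eval_X (q : ℂ[X][X]) (s : ℕ) (B : ℕ → ℤ → W)
    (hB : ∀ j < s, B (j + 1) = 0) (a b : ℤ) :
    deltaCoeff q s B a b = (q.eval X).sum fun t c => c • B 0 (t + (-a - b - 2)) := by
  rw [deltaCoeff, sum_range_succ', sum_eq_zero fun j hj => by simp [hB j (mem_range.mp hj)],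
    zero_add, ← sum_support_sum_support_smul_eq_sum_eval_X]
  refine sum_congr rfl fun i _ => sum_congr rfl fun k _ => ?_
  rw [intBinom_zero, mul_one]
  congr 2
  push_cast
  ring

lemma eq_zero_of_deltaCoeff_eq_zero_of_succ_eq_zero {q : ℂ[X][X]} (hq : q.eval X ≠ 0) {s : ℕ}
    {B : ℕ → ℤ → W} (hB₀ : ∃ N, ∀ n ≤ N, B 0 n = 0) (hB : ∀ j < s, B (j + 1) = 0)
    (h : ∀ a b, deltaCoeff q s B a b = 0) : B 0 = 0 := by
  refine eq_zero_of_forall_sum_smul_shift_eq_zero hq hB₀ fun m => ?_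
  simpa [deltaCoeff_eq_sum_eval_X q s B hB] using h 0 (-m - 2)

theorem eq_zero_of_deltaCoeff_eq_zero {q : ℂ[X][X]} (hq : q.eval X ≠ 0) {s : ℕ}
    {B : ℕ → ℤ → W} (hB : ∀ j ≤ s, ∃ N, ∀ n ≤ N, B j n = 0)
    (h : ∀ a b, deltaCoeff q s B a b = 0) : ∀ j ≤ s, B j = 0 := by
  induction s generalizing B with
  | zero =>
    intro j hj
    obtain rfl : j = 0 := by omega
    exact eq_zero_of_deltaCoeff_eq_zero_of_succ_eq_zero hq (hB 0 le_rfl) (by simp) h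
  | succ s ih =>
    have hsucc : ∀ j ≤ s, B (j + 1) = 0 :=
      ih (fun j hj => hB (j + 1) (by omega)) fun a b => by
        rw [← deltaCoeff_sub_deltaCoeff, h, h, sub_zero]
    rintro (_ | j) hj
    · exact eq_zero_of_deltaCoeff_eq_zero_of_succ_eq_zero hq (hB 0 (by omega))
        (fun j hj => hsucc j (by omega)) h
    · exact hsucc j (by omega)

end

theorem stmt_18_general (W : Type) [AddCommGroup W] [Module ℂ W] (s : ℕ)
    (A : ℕ → ℤ → Module.End ℂ W)
    (hA : ∀ j : ℕ, j ≤ s → ∀ w : W, ∃ N : ℤ, ∀ n : ℤ, n ≤ N → A j n w = 0)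
    (q : Polynomial (Polynomial ℂ))
    (hcop : IsCoprime (q.map (Polynomial.evalRingHom (1 : ℂ)))
      (Polynomial.X - Polynomial.C 1))
    (hzero : ∀ (a b : ℤ) (w : W),
      (∑ j ∈ Finset.range (s + 1), ∑ i ∈ q.support, ∑ k ∈ (q.coeff i).support,
        (((q.coeff i).coeff k) * intBinom ((i : ℤ) - a - 1) j) •
          A j ((k : ℤ) + (i : ℤ) - a - (j : ℤ) - b - 2) w) = 0) :
    ∀ j : ℕ, j ≤ s → ∀ (n : ℤ) (w : W), A j n w = 0 := by
  intro j hj n w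
  have hB := eq_zero_of_deltaCoeff_eq_zero (eval_X_ne_zero_of_isCoprime hcop)
    (B := fun j n => A j n w) (fun j hj => hA j hj w) (fun a b => hzero a b w) j hj
  exact congrFun hB n

/-- Suppose `A_j(x) ∈ Hom(W,W((x⁻¹)))` for `0 ≤ j ≤ s` satisfy
`Σ_{j=0}^{s} q(x₁,x) A_j(x) (1/j!)(∂/∂x)^j x₁⁻¹δ(x/x₁) = 0`, where `q(x₁,x)` is a
polynomial (outer variable `x₁`, inner variable `x`) such that `q(x₁,1)` and `x₁ − 1`
are relatively prime.  (Coefficientwise, the hypothesis says that at each `x₁^a x^b`: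
`Σ_j Σ_{(i,k) ∈ supp q} q_{ik} C(i−a−1, j) A_j(k+i−a−j−b−2) w = 0`, coming from
`x₁⁻¹δ(x/x₁) = Σ_n xⁿ x₁^{−n−1}` and `(1/j!)(∂/∂x)^j xⁿ = C(n,j)x^{n−j}`.)
Then `A_j = 0` for all `0 ≤ j ≤ s`. -/
theorem stmt_18 (W : Type) [AddCommGroup W] [Module ℂ W] (s : ℕ)
    (A : ℕ → ℤ → Module.End ℂ W)
    (hA : ∀ j : ℕ, j ≤ s → ∀ w : W, ∃ N : ℤ, ∀ n : ℤ, n ≤ N → A j n w = 0)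
    (q : Polynomial (Polynomial ℂ)) (hq0 : q ≠ 0)
    (hcop : IsCoprime (q.map (Polynomial.evalRingHom (1 : ℂ)))
      (Polynomial.X - Polynomial.C 1))
    (hzero : ∀ (a b : ℤ) (w : W),
      (∑ j ∈ Finset.range (s + 1), ∑ i ∈ q.support, ∑ k ∈ (q.coeff i).support,
        (((q.coeff i).coeff k) * intBinom ((i : ℤ) - a - 1) j) •
          A j ((k : ℤ) + (i : ℤ) - a - (j : ℤ) - b - 2) w) = 0) :
    ∀ j : ℕ, j ≤ s → ∀ (n : ℤ) (w : W), A j n w = 0 :=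
  stmt_18_general W s A hA q hcop hzero
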